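/- Under the mixture observation model, the scatter matrix satisfies λ_max(E_{x∼p}[z(x)_S z(x)_Sᵀ]) ≤ ν·|S| + (1−ν). -/

import Mathlib

/- Common setup: linear influence games (LIGs), the PSNE set, the noisy
observation model, feature vectors, the logistic loss and its gradient,
population/sample Hessian and scatter matrices, and Rayleigh-quotient
encodings of eigenvalue bounds for (symmetric) submatrices.

Joint actions in `{-1,+1}^n` are modeled as `Fin n → Bool` via the sign map
`sgn` (`true ↦ +1`, `false ↦ -1`).  For player `i`, the feature vector
`z_i(x) = (x_i · x_{-i}, x_i)` and the parameter vector `v_i = (w_{i,-i}, -b_i)`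
are indexed by `Fin n`, with the bias coordinate placed at index `i`
(a fixed permutation of the paper's coordinate ordering), so that
`v_i ⬝ᵥ z_i(x) = x_i (∑_{j ≠ i} W i j · x_j - b i)` is player `i`'s payoff. -/

open Matrix Finset

noncomputable section

/-- Sign of a Boolean action: `true ↦ +1`, `false ↦ -1`. -/
def sgn (a : Bool) : ℝ := if a then 1 else -1

/-- Payoff of player `i` at joint action `x` in the LIG `(W, b)`:
`x_i (∑_{j ≠ i} W i j · x_j - b i)`. -/
def payoff {n : ℕ} (W : Matrix (Fin n) (Fin n) ℝ) (b : Fin n → ℝ)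
    (i : Fin n) (x : Fin n → Bool) : ℝ :=
  sgn (x i) * ((∑ j ∈ Finset.univ.erase i, W i j * sgn (x j)) - b i)

/-- The pure-strategy Nash equilibria set `NE(W, b)`. -/
def NEset {n : ℕ} (W : Matrix (Fin n) (Fin n) ℝ) (b : Fin n → ℝ) :
    Finset (Fin n → Bool) :=
  @Finset.filter _ (fun x => ∀ i, 0 ≤ payoff W b i x) (Classical.decPred _)
    Finset.univ

/-- The observation distribution
`p(x) = q·1[x ∈ NE]/|NE| + (1-q)·1[x ∉ NE]/(2^n - |NE|)`. -/
def pObs {n : ℕ} (q : ℝ) (NE : Finset (Fin n → Bool)) (x : Fin n → Bool) : ℝ :=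
  if x ∈ NE then q / (NE.card : ℝ)
  else (1 - q) / ((2 : ℝ) ^ n - (NE.card : ℝ))

/-- The mixture coefficient `ν = (q - c/2^n)/(1 - c/2^n)`, where `c = |NE*|`. -/
def mixCoef (n : ℕ) (q : ℝ) (c : ℕ) : ℝ :=
  (q - (c : ℝ) / (2 : ℝ) ^ n) / (1 - (c : ℝ) / (2 : ℝ) ^ n)

/-- Feature vector `z_i(x) = (x_i·x_{-i}, x_i)` (bias coordinate at index `i`). -/
def zvec {n : ℕ} (i : Fin n) (x : Fin n → Bool) : Fin n → ℝ :=
  fun j => if j = i then sgn (x i) else sgn (x i) * sgn (x j)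

/-- Parameter vector `v_i = (w_{i,-i}, -b_i)` (bias coordinate at index `i`). -/
def vvec {n : ℕ} (W : Matrix (Fin n) (Fin n) ℝ) (b : Fin n → ℝ) (i : Fin n) :
    Fin n → ℝ :=
  fun j => if j = i then -b i else W i j

/-- Support `S = {j : v_j ≠ 0}` of a vector. -/
def supp {n : ℕ} (v : Fin n → ℝ) : Finset (Fin n) :=
  @Finset.filter _ (fun j => v j ≠ 0) (Classical.decPred _) Finset.univ

/-- `η(s) = 1/(e^{s/2} + e^{-s/2})²`. -/
def eta (s : ℝ) : ℝ := 1 / (Real.exp (s / 2) + Real.exp (-s / 2)) ^ 2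

/-- Logistic loss `ℓ_i(v, D) = (1/m) ∑_l log(1 + exp(-vᵀ z_i(x⁽ˡ⁾)))`. -/
def loss {n m : ℕ} (i : Fin n) (v : Fin n → ℝ)
    (D : Fin m → (Fin n → Bool)) : ℝ :=
  (1 / (m : ℝ)) * ∑ l, Real.log (1 + Real.exp (-(v ⬝ᵥ zvec i (D l))))

/-- Gradient of the logistic loss,
`∇ℓ(v, D) = (1/m) ∑_l (-z⁽ˡ⁾)/(1 + exp(vᵀ z⁽ˡ⁾))`. -/
def gradLoss {n m : ℕ} (i : Fin n) (v : Fin n → ℝ)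
    (D : Fin m → (Fin n → Bool)) : Fin n → ℝ :=
  fun j => (1 / (m : ℝ)) *
    ∑ l, -(zvec i (D l) j) / (1 + Real.exp (v ⬝ᵥ zvec i (D l)))

/-- ℓ1 norm `‖v‖₁ = ∑_j |v_j|`. -/
def norm1 {n : ℕ} (v : Fin n → ℝ) : ℝ := ∑ j, |v j|

/-- Quadratic form `yᵀ M y`. -/
def quadForm {n : ℕ} (M : Matrix (Fin n) (Fin n) ℝ) (y : Fin n → ℝ) : ℝ :=
  y ⬝ᵥ M.mulVec y

/-- `λ_min(M_SS) ≥ c`, encoded via the Rayleigh quotient over vectors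
supported on `S` (exactly equivalent for symmetric `M`). -/
def minEigSubGE {n : ℕ} (M : Matrix (Fin n) (Fin n) ℝ) (S : Finset (Fin n))
    (c : ℝ) : Prop :=
  ∀ y : Fin n → ℝ, (∀ j ∉ S, y j = 0) → c * (∑ j, y j ^ 2) ≤ quadForm M y

/-- `λ_min(M_SS) > c` (Rayleigh form; equivalent for symmetric `M` since the
unit sphere of the finite-dimensional subspace is compact). -/
def minEigSubGT {n : ℕ} (M : Matrix (Fin n) (Fin n) ℝ) (S : Finset (Fin n))
    (c : ℝ) : Prop :=
  ∀ y : Fin n → ℝ, (∀ j ∉ S, y j = 0) → y ≠ 0 →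
    c * (∑ j, y j ^ 2) < quadForm M y

/-- `λ_max(M_SS) ≤ c` (Rayleigh form). -/
def maxEigSubLE {n : ℕ} (M : Matrix (Fin n) (Fin n) ℝ) (S : Finset (Fin n))
    (c : ℝ) : Prop :=
  ∀ y : Fin n → ℝ, (∀ j ∉ S, y j = 0) → quadForm M y ≤ c * (∑ j, y j ^ 2)

/-- `λ_max(M_SS) < c` (Rayleigh form). -/
def maxEigSubLT {n : ℕ} (M : Matrix (Fin n) (Fin n) ℝ) (S : Finset (Fin n))
    (c : ℝ) : Prop :=
  ∀ y : Fin n → ℝ, (∀ j ∉ S, y j = 0) → y ≠ 0 →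
    quadForm M y < c * (∑ j, y j ^ 2)

/-- `λ_max(M_SS) ≥ c` (Rayleigh form: some nonzero supported vector attains it). -/
def maxEigSubGE {n : ℕ} (M : Matrix (Fin n) (Fin n) ℝ) (S : Finset (Fin n))
    (c : ℝ) : Prop :=
  ∃ y : Fin n → ℝ, (∀ j ∉ S, y j = 0) ∧ y ≠ 0 ∧
    c * (∑ j, y j ^ 2) ≤ quadForm M y

/-- Population Hessian `H*_i = E_{x∼p}[η(vᵀz_i(x)) z_i(x) z_i(x)ᵀ]`. -/
def popHess {n : ℕ} (q : ℝ) (NE : Finset (Fin n → Bool)) (i : Fin n)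
    (v : Fin n → ℝ) : Matrix (Fin n) (Fin n) ℝ :=
  ∑ x : Fin n → Bool,
    (pObs q NE x * eta (v ⬝ᵥ zvec i x)) • vecMulVec (zvec i x) (zvec i x)

/-- Population scatter matrix `E_{x∼p}[z_i(x) z_i(x)ᵀ]`. -/
def popScatter {n : ℕ} (q : ℝ) (NE : Finset (Fin n → Bool)) (i : Fin n) :
    Matrix (Fin n) (Fin n) ℝ :=
  ∑ x : Fin n → Bool, pObs q NE x • vecMulVec (zvec i x) (zvec i x)

/-- Sample Hessian `H^m = (1/m) ∑_l η(vᵀz⁽ˡ⁾) z⁽ˡ⁾ (z⁽ˡ⁾)ᵀ`. -/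
def sampleHess {n m : ℕ} (i : Fin n) (v : Fin n → ℝ)
    (D : Fin m → (Fin n → Bool)) : Matrix (Fin n) (Fin n) ℝ :=
  (1 / (m : ℝ)) •
    ∑ l, eta (v ⬝ᵥ zvec i (D l)) • vecMulVec (zvec i (D l)) (zvec i (D l))

/-- Sample scatter matrix `(1/m) ∑_l z⁽ˡ⁾ (z⁽ˡ⁾)ᵀ`. -/
def sampleScatter {n m : ℕ} (i : Fin n) (D : Fin m → (Fin n → Bool)) :
    Matrix (Fin n) (Fin n) ℝ :=
  (1 / (m : ℝ)) • ∑ l, vecMulVec (zvec i (D l)) (zvec i (D l))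

/-- Probability of the event `E` under `m` i.i.d. draws from `p`. -/
def iidProb {X : Type*} [Fintype X] (p : X → ℝ) (m : ℕ)
    (E : Set (Fin m → X)) : ℝ :=
  ∑ D : Fin m → X, E.indicator (fun D => ∏ l, p (D l)) D

/-- `ρ` is the minimum payoff over the PSNE set of `(W, b)`. -/
def isMinPayoff {n : ℕ} (W : Matrix (Fin n) (Fin n) ℝ) (b : Fin n → ℝ)
    (ρ : ℝ) : Prop :=
  IsLeast {r : ℝ | ∃ x ∈ NEset W b, ∃ i, r = payoff W b i x} ρ

/- Write `c = |NE*|` and `ν = (q - c/2^n)/(1 - c/2^n)`. The observation law is the mixture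
`p = ν · Unif(NE*) + (1 - ν) · Unif({-1,+1}^n)`, so the scatter matrix splits accordingly.
Under the uniform law the coordinates of `z(x)` are orthonormal (flipping one player's action
changes the sign of every off-diagonal product), so that part is the identity. Under `Unif(NE*)`,
Cauchy–Schwarz with `z_j² = 1` bounds `(zᵀy)²` by `|S| ‖y‖²` for `y` supported on `S`. -/

lemma sgn_mul_self (a : Bool) : sgn a * sgn a = 1 := by
  cases a <;> norm_num [sgn]

lemma Fintype.sum_eq_zero_of_involutive_of_neg {ι M : Type*} [Fintype ι] [AddCommGroup M]
    [LinearOrder M] [IsOrderedAddMonoid M] {e : ι → ι} (he : Function.Involutive e)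
    {f : ι → M} (hf : ∀ x, f (e x) = -f x) : ∑ x, f x = 0 := by
  have h : ∑ x, f x = ∑ x, -f x :=
    Fintype.sum_bijective e he.bijective f (fun x => -f x) fun x => by rw [hf, neg_neg]
  rw [Finset.sum_neg_distrib] at h
  exact eq_zero_of_neg_eq h.symm

section

variable {n : ℕ}

lemma zvec_mul_self (i : Fin n) (x : Fin n → Bool) (j : Fin n) :
    zvec i x j * zvec i x j = 1 := by
  unfold zvec
  split_ifs
  · exact sgn_mul_self _
  · rw [mul_mul_mul_comm, sgn_mul_self, sgn_mul_self, one_mul]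

lemma zvec_update_not {i k : Fin n} (hk : k ≠ i) (x : Fin n → Bool) (j : Fin n) :
    zvec i (Function.update x k (!x k)) j = (if j = k then -1 else 1) * zvec i x j := by
  have hsgn : sgn (!x k) = -sgn (x k) := by cases x k <;> simp [sgn]
  rcases eq_or_ne j k with rfl | hj
  · simp [zvec, hk, Function.update_of_ne hk.symm, hsgn]
  · rcases eq_or_ne j i with rfl | hji
    · simp [zvec, hj]
    · simp [zvec, hj, hji, Function.update_of_ne hk.symm]

lemma update_not_involutive (k : Fin n) :
    Function.Involutive fun x : Fin n → Bool => Function.update x k (!x k) := by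
  intro x
  funext j
  by_cases hj : j = k <;> simp [Function.update, hj]

lemma sum_zvec_mul_zvec_of_ne (i : Fin n) {j k : Fin n} (hjk : j ≠ k) :
    ∑ x : Fin n → Bool, zvec i x j * zvec i x k = 0 := by
  -- flip the action of whichever of `j`, `k` is not the bias coordinate `i`
  by_cases hj : j = i
  · have hk : k ≠ i := hj ▸ hjk.symm
    refine Fintype.sum_eq_zero_of_involutive_of_neg (update_not_involutive k) fun x => ?_
    simp only [zvec_update_not hk, if_neg hjk, ↓reduceIte]
    ring
  · refine Fintype.sum_eq_zero_of_involutive_of_neg (update_not_involutive j) fun x => ?_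
    simp only [zvec_update_not hj, if_neg hjk.symm, ↓reduceIte]
    ring

lemma sum_vecMulVec_zvec (i : Fin n) :
    ∑ x : Fin n → Bool, vecMulVec (zvec i x) (zvec i x) =
      (2 : ℝ) ^ n • (1 : Matrix (Fin n) (Fin n) ℝ) := by
  ext j k
  simp only [Matrix.sum_apply, vecMulVec_apply, Matrix.smul_apply, one_apply, smul_eq_mul]
  split_ifs with hjk
  · simp [hjk, zvec_mul_self, Finset.card_univ]
  · rw [sum_zvec_mul_zvec_of_ne i hjk, mul_zero]

lemma quadForm_add (M N : Matrix (Fin n) (Fin n) ℝ) (y : Fin n → ℝ) :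
    quadForm (M + N) y = quadForm M y + quadForm N y := by
  simp only [quadForm, add_mulVec, dotProduct_add]

lemma quadForm_smul (a : ℝ) (M : Matrix (Fin n) (Fin n) ℝ) (y : Fin n → ℝ) :
    quadForm (a • M) y = a * quadForm M y := by
  simp only [quadForm, smul_mulVec, dotProduct_smul, smul_eq_mul]

lemma quadForm_one (y : Fin n → ℝ) : quadForm 1 y = ∑ j, y j ^ 2 := by
  simp only [quadForm, one_mulVec, dotProduct, sq]

lemma quadForm_sum_vecMulVec {ι : Type*} (s : Finset ι) (u : ι → Fin n → ℝ)
    (y : Fin n → ℝ) :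
    quadForm (∑ x ∈ s, vecMulVec (u x) (u x)) y = ∑ x ∈ s, (u x ⬝ᵥ y) ^ 2 := by
  simp only [quadForm, sum_mulVec, dotProduct_sum, vecMulVec_mulVec, op_smul_eq_smul,
    dotProduct_smul, smul_eq_mul]
  exact sum_congr rfl fun x _ => by rw [dotProduct_comm, sq]

lemma sq_dotProduct_le_card_mul {S : Finset (Fin n)} {u y : Fin n → ℝ}
    (hu : ∀ j, u j ^ 2 = 1) (hy : ∀ j ∉ S, y j = 0) :
    (u ⬝ᵥ y) ^ 2 ≤ (#S : ℝ) * ∑ j, y j ^ 2 := by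
  have hS : u ⬝ᵥ y = ∑ j ∈ S, u j * y j :=
    (Finset.sum_subset (subset_univ S) fun j _ hj => by rw [hy j hj, mul_zero]).symm
  calc (u ⬝ᵥ y) ^ 2 ≤ (∑ j ∈ S, u j ^ 2) * ∑ j ∈ S, y j ^ 2 :=
        hS ▸ Finset.sum_mul_sq_le_sq_mul_sq S u y
    _ ≤ #S * ∑ j, y j ^ 2 := by
        simp only [hu, sum_const, nsmul_eq_mul, mul_one]
        gcongr
        exact subset_univ S

lemma mixCoef_nonneg {c : ℕ} {q : ℝ} (hc : c < 2 ^ n) (hq : (c : ℝ) / 2 ^ n < q) :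
    0 ≤ mixCoef n q c := by
  have hlt : (c : ℝ) / 2 ^ n < 1 := (div_lt_one (by positivity)).mpr (by exact_mod_cast hc)
  exact div_nonneg (sub_nonneg.mpr hq.le) (sub_nonneg.mpr hlt.le)

/-- Also valid for `NE = ∅`, where the junk value `(#NE : ℝ)⁻¹ = 0` meets a vanishing indicator. -/
lemma pObs_eq_mix (q : ℝ) {NE : Finset (Fin n → Bool)} (hNE : #NE < 2 ^ n)
    (x : Fin n → Bool) :
    pObs q NE x = mixCoef n q #NE * ((#NE : ℝ)⁻¹ * if x ∈ NE then 1 else 0) +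
      (1 - mixCoef n q #NE) / 2 ^ n := by
  have hlt : (#NE : ℝ) < 2 ^ n := by exact_mod_cast hNE
  have hP : (0 : ℝ) < 2 ^ n := by positivity
  have hPc : (2 : ℝ) ^ n - #NE ≠ 0 := (sub_pos.mpr hlt).ne'
  have hd : 1 - (#NE : ℝ) / 2 ^ n ≠ 0 := (sub_pos.mpr ((div_lt_one hP).mpr hlt)).ne'
  unfold pObs mixCoef
  split_ifs with hx
  · have hc : (#NE : ℝ) ≠ 0 := by exact_mod_cast (card_pos.mpr ⟨x, hx⟩).ne'
    field_simp
    ring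
  · field_simp
    ring

lemma popScatter_eq_mix (q : ℝ) {NE : Finset (Fin n → Bool)} (hNE : #NE < 2 ^ n)
    (i : Fin n) :
    popScatter q NE i = mixCoef n q #NE •
        ((#NE : ℝ)⁻¹ • ∑ x ∈ NE, vecMulVec (zvec i x) (zvec i x)) +
      (1 - mixCoef n q #NE) • 1 := by
  have hP : (2 : ℝ) ^ n ≠ 0 := by positivity
  simp only [popScatter, pObs_eq_mix q hNE, add_smul, sum_add_distrib, mul_smul, ← smul_sum,
    ite_smul, one_smul, zero_smul, sum_ite_mem, univ_inter, sum_vecMulVec_zvec, div_eq_mul_inv]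
  rw [inv_smul_smul₀ hP]

end

theorem population_scatter_max_eig_general
    (n : ℕ) (W : Matrix (Fin n) (Fin n) ℝ) (b : Fin n → ℝ)
    (q : ℝ)
    (hNE2 : (NEset W b).card < 2 ^ n)
    (hq1 : ((NEset W b).card : ℝ) / (2 : ℝ) ^ n < q)
    (i : Fin n) :
    maxEigSubLE (popScatter q (NEset W b) i) (supp (vvec W b i))
      (mixCoef n q (NEset W b).card * ((supp (vvec W b i)).card : ℝ) +
        (1 - mixCoef n q (NEset W b).card)) := by
  intro y hy
  set NE := NEset W b
  set S := supp (vvec W b i)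
  have hν : 0 ≤ mixCoef n q #NE := mixCoef_nonneg hNE2 hq1
  have hbound : ∀ x, (zvec i x ⬝ᵥ y) ^ 2 ≤ #S * ∑ j, y j ^ 2 := fun x =>
    sq_dotProduct_le_card_mul (fun j => (sq _).trans (zvec_mul_self i x j)) hy
  have hNE : (#NE : ℝ)⁻¹ * ∑ x ∈ NE, (zvec i x ⬝ᵥ y) ^ 2 ≤ #S * ∑ j, y j ^ 2 := by
    refine inv_mul_le_of_le_mul₀ (Nat.cast_nonneg _) (by positivity) ?_
    simpa using Finset.sum_le_card_nsmul NE _ _ fun x _ => hbound x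
  rw [popScatter_eq_mix q hNE2 i, quadForm_add, quadForm_smul, quadForm_smul, quadForm_smul,
    quadForm_sum_vecMulVec, quadForm_one]
  linarith [mul_le_mul_of_nonneg_left hNE hν]

/-- under the mixture observation model, the scatter matrix
satisfies `λ_max(E_{x∼p}[z_S z_Sᵀ]) ≤ ν·|S| + (1-ν)`. -/
theorem population_scatter_max_eig
    (n : ℕ) (W : Matrix (Fin n) (Fin n) ℝ) (b : Fin n → ℝ)
    (hdiag : ∀ i, W i i = 0) (q : ℝ)
    (hNE1 : 1 ≤ (NEset W b).card) (hNE2 : (NEset W b).card < 2 ^ n)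
    (hq1 : ((NEset W b).card : ℝ) / (2 : ℝ) ^ n < q) (hq2 : q < 1)
    (i : Fin n) :
    maxEigSubLE (popScatter q (NEset W b) i) (supp (vvec W b i))
      (mixCoef n q (NEset W b).card * ((supp (vvec W b i)).card : ℝ) +
        (1 - mixCoef n q (NEset W b).card)) :=
  population_scatter_max_eig_general n W b q hNE2 hq1 i
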